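/- arXiv:2310.17237 — 7 statements merged into one kernel-verified Lean document; each statement's English description precedes it below -/
import Mathlib

section
/- Let m ≤ n < p be integers. For i = m,…,p let θ_i : ℝ → ℝ be θ_i(z) = σ_i·l(z) + (ρ/2)(z − m_i)², where ρ > 0, σ_i ≥ 0, m_i ∈ ℝ, and l : ℝ → ℝ is convex. For integers a ≤ b let h_{[a,b]}(z) = Σ_{i=a}^{b} θ_i(z); each h_{[a,b]} is ρ(b−a+1)-strongly convex and continuous, hence has a unique minimizer v_{[a,b]}. If v_{[m,n]} > v_{[n+1,p]} (i.e., the blocks [m,n] and [n+1,p] are out-of-order), then the minimizer of the merged block satisfies v_{[n+1,p]} ≤ v_{[m,p]} ≤ v_{[m,n]}. -/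
/-!
Both block objectives are convex, so `h m n` is antitone left of its minimizer `vmn` and
`h (n + 1) p` is monotone right of its minimizer `vnp`. If `vmp < vnp`, moving from `vmp` to
`vnp` does not increase `h m n` and strictly decreases `h (n + 1) p`, hence strictly decreases
their sum `h m p`, contradicting minimality of `vmp`; the case `vmn < vmp` is symmetric.
-/

open Set

theorem convexOn_finset_sum {𝕜 E β ι : Type*} [Semiring 𝕜] [PartialOrder 𝕜]
    [AddCommMonoid E] [AddCommMonoid β] [PartialOrder β] [IsOrderedAddMonoid β]
    [SMul 𝕜 E] [Module 𝕜 β] {s : Set E} (hs : Convex 𝕜 s) (t : Finset ι) {f : ι → E → β}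
    (hf : ∀ i ∈ t, ConvexOn 𝕜 s (f i)) : ConvexOn 𝕜 s fun x ↦ ∑ i ∈ t, f i x := by
  induction t using Finset.cons_induction with
  | empty => simpa using convexOn_const 0 hs
  | cons a t _ ih =>
    simp only [Finset.sum_cons]
    exact (hf a (t.mem_cons_self a)).add (ih fun i hi ↦ hf i (Finset.mem_cons_of_mem hi))

theorem Int.sum_Icc_add_sum_Icc {M : Type*} [AddCommMonoid M] (f : ℤ → M) {m n p : ℤ}
    (hmn : m ≤ n + 1) (hnp : n ≤ p) :
    ∑ i ∈ Finset.Icc m n, f i + ∑ i ∈ Finset.Icc (n + 1) p, f i = ∑ i ∈ Finset.Icc m p, f i := by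
  simp only [← Finset.Ico_add_one_right_eq_Icc]
  rw [← Finset.sum_union (Finset.Ico_disjoint_Ico_consecutive _ _ _),
    Finset.Ico_union_Ico_eq_Ico hmn (by omega)]

theorem isMinOn_univ_of_forall_ne_lt {α β : Type*} [Preorder β] {f : α → β} {v : α}
    (hv : ∀ z, z ≠ v → f v < f z) : IsMinOn f univ v := fun z _ ↦ by
  rcases eq_or_ne z v with rfl | hz
  exacts [le_rfl, (hv z hz).le]

section ConvexMinimizer

variable {𝕜 β : Type*} [Field 𝕜] [LinearOrder 𝕜] [IsStrictOrderedRing 𝕜]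
  [AddCommMonoid β] [LinearOrder β] [IsOrderedCancelAddMonoid β] [Module 𝕜 β]
  [PosSMulStrictMono 𝕜 β] {f : 𝕜 → β} {v : 𝕜}

theorem ConvexOn.monotoneOn_Ici_of_isMinOn (hf : ConvexOn 𝕜 univ f) (hv : IsMinOn f univ v) :
    MonotoneOn f (Ici v) := by
  intro a ha b _ hab
  rcases (mem_Ici.1 ha).eq_or_lt with rfl | hva
  · exact hv (mem_univ b)
  rcases hab.eq_or_lt with rfl | hab
  · exact le_rfl
  exact hf.le_right_of_left_le (mem_univ v) (mem_univ b)
    (by rw [openSegment_eq_Ioo (hva.trans hab)]; exact ⟨hva, hab⟩) (hv (mem_univ a))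

theorem ConvexOn.antitoneOn_Iic_of_isMinOn (hf : ConvexOn 𝕜 univ f) (hv : IsMinOn f univ v) :
    AntitoneOn f (Iic v) := by
  intro a _ b hb hab
  rcases (mem_Iic.1 hb).eq_or_lt with rfl | hbv
  · exact hv (mem_univ a)
  rcases hab.eq_or_lt with rfl | hab
  · exact le_rfl
  exact hf.le_left_of_right_le (mem_univ a) (mem_univ v)
    (by rw [openSegment_eq_Ioo (hab.trans hbv)]; exact ⟨hab, hbv⟩) (hv (mem_univ b))

end ConvexMinimizer

theorem mem_Icc_of_isMinOn_add {f g : ℝ → ℝ} {vf vg u : ℝ}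
    (hf : ConvexOn ℝ univ f) (hg : ConvexOn ℝ univ g)
    (hvf : ∀ z, z ≠ vf → f vf < f z) (hvg : ∀ z, z ≠ vg → g vg < g z) (hle : vg ≤ vf)
    (hu : IsMinOn (f + g) univ u) : u ∈ Icc vg vf := by
  have hu' := fun z ↦ isMinOn_univ_iff.1 hu z
  simp only [Pi.add_apply] at hu'
  constructor
  · by_contra! hlt
    have hf_le : f vg ≤ f u :=
      hf.antitoneOn_Iic_of_isMinOn (isMinOn_univ_of_forall_ne_lt hvf)
        (mem_Iic.2 (hlt.le.trans hle)) (mem_Iic.2 hle) hlt.le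
    linarith [hvg u hlt.ne, hu' vg]
  · by_contra! hlt
    have hg_le : g vf ≤ g u :=
      hg.monotoneOn_Ici_of_isMinOn (isMinOn_univ_of_forall_ne_lt hvg)
        (mem_Ici.2 hle) (mem_Ici.2 (hle.trans hlt.le)) hlt.le
    linarith [hvf u hlt.ne', hu' vf]

theorem convexOn_smul_add_mul_sq_sub {l : ℝ → ℝ} (hl : ConvexOn ℝ univ l) {σ c : ℝ}
    (hσ : 0 ≤ σ) (hc : 0 ≤ c) (μ : ℝ) :
    ConvexOn ℝ univ fun z ↦ σ * l z + c * (z - μ) ^ 2 := by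
  have hsq : ConvexOn ℝ univ fun z : ℝ ↦ (z - μ) ^ 2 := by
    simpa [sub_eq_neg_add, Function.comp_def] using (even_two.convexOn_pow (𝕜 := ℝ)).translate_right (-μ)
  exact (hl.smul hσ).add (hsq.smul hc)

/-- **Proposition 1 (PAVA merge step).**
For `m ≤ n < p` and `θ i z = σ i * l z + (ρ/2) (z - μ i)^2` with `ρ > 0`, `σ i ≥ 0` and
`l` convex, let `h a b z = ∑_{i ∈ [a,b]} θ i z`, and let `v_{[a,b]}` denote its unique
minimizer.  If `v_{[m,n]} > v_{[n+1,p]}` (the two blocks are out-of-order), then the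
minimizer of the merged block satisfies `v_{[n+1,p]} ≤ v_{[m,p]} ≤ v_{[m,n]}`. -/
theorem pava_merge_between
    (m n p : ℤ) (hmn : m ≤ n) (hnp : n < p)
    (l : ℝ → ℝ) (hl : ConvexOn ℝ Set.univ l)
    (ρ : ℝ) (hρ : 0 < ρ)
    (σ μ : ℤ → ℝ) (hσ : ∀ i ∈ Finset.Icc m p, 0 ≤ σ i)
    (θ : ℤ → ℝ → ℝ)
    (hθ : ∀ i z, θ i z = σ i * l z + ρ / 2 * (z - μ i) ^ 2)
    (h : ℤ → ℤ → ℝ → ℝ)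
    (hdef : ∀ a b z, h a b z = ∑ i ∈ Finset.Icc a b, θ i z)
    (vmn vnp vmp : ℝ)
    (hvmn : ∀ z, z ≠ vmn → h m n vmn < h m n z)
    (hvnp : ∀ z, z ≠ vnp → h (n + 1) p vnp < h (n + 1) p z)
    (hvmp : ∀ z, z ≠ vmp → h m p vmp < h m p z)
    (horder : vnp < vmn) :
    vnp ≤ vmp ∧ vmp ≤ vmn := by
  have hθ_convex : ∀ i ∈ Finset.Icc m p, ConvexOn ℝ univ (θ i) := fun i hi ↦ by
    rw [funext (hθ i)]
    exact convexOn_smul_add_mul_sq_sub hl (hσ i hi) (by positivity) (μ i)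
  have hblock_convex : ∀ a b, Finset.Icc a b ⊆ Finset.Icc m p → ConvexOn ℝ univ (h a b) :=
    fun a b hab ↦ by
      rw [funext (hdef a b)]
      exact convexOn_finset_sum convex_univ _ fun i hi ↦ hθ_convex i (hab hi)
  have hsplit : h m n + h (n + 1) p = h m p := funext fun z ↦ by
    simp only [Pi.add_apply, hdef]
    exact Int.sum_Icc_add_sum_Icc _ (by omega) hnp.le
  have hmin : IsMinOn (h m n + h (n + 1) p) univ vmp := by
    rw [hsplit]
    exact isMinOn_univ_of_forall_ne_lt hvmp
  exact mem_Icc_of_isMinOn_add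
    (hblock_convex m n (Finset.Icc_subset_Icc le_rfl hnp.le))
    (hblock_convex (n + 1) p (Finset.Icc_subset_Icc (by omega) le_rfl))
    hvmn hvnp horder.le hmin
end

section
/- Let m ≤ n < p be integers. For i = m,…,p let θ_i : ℝ → ℝ be θ_i(z) = σ_i·l(z) + (ρ/2)(z − m_i)², where ρ > 0, σ_i ≥ 0, l : ℝ → ℝ is convex and monotonically increasing, and the points m_i satisfy m_m ≤ m_{m+1} ≤ … ≤ m_p. For integers a ≤ b let v_{[a,b]} denote the unique minimizer of h_{[a,b]}(z) = Σ_{i=a}^{b} θ_i(z). If the consecutive blocks [m,n] and [n+1,p] are out-of-order, i.e., v_{[m,n]} > v_{[n+1,p]}, then (Σ_{i=m}^{n} σ_i)/(n−m+1) < (Σ_{i=n+1}^{p} σ_i)/(p−n). -/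
/-!
Write `c`, `S`, `M` for the size of a block, the sum of its weights `σ i` and the sum of its
points `μ i`. Up to a constant, the objective of a block is `S l z + ρ/2 (c z² - 2 M z)`.
Comparing the two blocks at their minimizers `y < x` and eliminating `z²` by cross-multiplying
with the block sizes gives
`(c₂ S₁ - c₁ S₂) (l x - l y) + ρ (x - y) (c₁ M₂ - c₂ M₁) < 0`.
The second term is nonnegative because the points of the first block lie below those of the
second, and `l x - l y ≥ 0` because `l` is monotone, so `c₂ S₁ < c₁ S₂`.
-/

open Finset

section BlockObjective

variable {ι : Type*} (σ μ : ι → ℝ) (l : ℝ → ℝ) (ρ : ℝ)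

noncomputable def blockObjective (s : Finset ι) (z : ℝ) : ℝ :=
  ∑ i ∈ s, (σ i * l z + ρ / 2 * (z - μ i) ^ 2)

theorem blockObjective_sub (s : Finset ι) (x y : ℝ) :
    blockObjective σ μ l ρ s x - blockObjective σ μ l ρ s y
      = (∑ i ∈ s, σ i) * (l x - l y)
        + ρ / 2 * (x - y) * (#s * (x + y) - 2 * ∑ i ∈ s, μ i) := by
  calc blockObjective σ μ l ρ s x - blockObjective σ μ l ρ s y
      = ∑ i ∈ s, (σ i * (l x - l y) + ρ / 2 * (x - y) * ((x + y) - 2 * μ i)) := by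
        rw [blockObjective, blockObjective, ← sum_sub_distrib]
        exact sum_congr rfl fun i _ => by ring
    _ = _ := by
        rw [sum_add_distrib, ← sum_mul, ← mul_sum, sum_sub_distrib, sum_const, nsmul_eq_mul,
          ← mul_sum]

end BlockObjective

theorem card_mul_sum_le_card_mul_sum {ι : Type*} {s t : Finset ι} {μ : ι → ℝ}
    (hst : ∀ i ∈ s, ∀ j ∈ t, μ i ≤ μ j) :
    (#t : ℝ) * ∑ i ∈ s, μ i ≤ #s * ∑ j ∈ t, μ j := by
  have h : ∑ i ∈ s, ∑ _j ∈ t, μ i ≤ ∑ _i ∈ s, ∑ j ∈ t, μ j :=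
    sum_le_sum fun i hi => sum_le_sum fun j hj => hst i hi j hj
  simpa only [sum_const, nsmul_eq_mul, ← mul_sum] using h

theorem sum_div_card_lt_sum_div_card_of_minimizers_out_of_order {ι : Type*}
    {σ μ : ι → ℝ} {l : ℝ → ℝ} {ρ : ℝ} {s t : Finset ι} {x y : ℝ}
    (hl : Monotone l) (hρ : 0 ≤ ρ) (hs : s.Nonempty) (ht : t.Nonempty)
    (hst : ∀ i ∈ s, ∀ j ∈ t, μ i ≤ μ j)
    (hx : blockObjective σ μ l ρ s x < blockObjective σ μ l ρ s y)
    (hy : blockObjective σ μ l ρ t y < blockObjective σ μ l ρ t x) (hyx : y < x) :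
    (∑ i ∈ s, σ i) / #s < (∑ j ∈ t, σ j) / #t := by
  have hcs : (0 : ℝ) < #s := by exact_mod_cast hs.card_pos
  have hct : (0 : ℝ) < #t := by exact_mod_cast ht.card_pos
  have hs_diff := blockObjective_sub σ μ l ρ s x y
  have ht_diff := blockObjective_sub σ μ l ρ t x y
  have hcross : ((#t : ℝ) * ∑ i ∈ s, σ i - #s * ∑ j ∈ t, σ j) * (l x - l y)
      + ρ * (x - y) * (#s * ∑ j ∈ t, μ j - #t * ∑ i ∈ s, μ i) < 0 := by
    linear_combination (#t : ℝ) * hx + (#s : ℝ) * hy - (#t : ℝ) * hs_diff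
      + (#s : ℝ) * ht_diff
  have hmeans : 0 ≤ ρ * (x - y) * (#s * ∑ j ∈ t, μ j - #t * ∑ i ∈ s, μ i) :=
    mul_nonneg (mul_nonneg hρ (sub_pos.2 hyx).le) (sub_nonneg.2 (card_mul_sum_le_card_mul_sum hst))
  have hweights : (#t : ℝ) * ∑ i ∈ s, σ i - #s * ∑ j ∈ t, σ j < 0 :=
    neg_of_mul_neg_left (by linarith) (sub_nonneg.2 (hl hyx.le))
  rw [div_lt_div_iff₀ hcs hct]
  linarith

theorem Int.natCast_card_Icc {R : Type*} [Ring R] {a b : ℤ} (h : a ≤ b + 1) :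
    ((#(Icc a b) : ℕ) : R) = b - a + 1 := by
  rw [← Int.cast_natCast, Int.card_Icc_of_le a b h]
  push_cast
  abel

theorem pava_out_of_order_weights_general
    (m n p : ℤ) (hmn : m ≤ n) (hnp : n < p)
    (l : ℝ → ℝ) (hlmono : Monotone l)
    (ρ : ℝ) (hρ : 0 < ρ)
    (σ μ : ℤ → ℝ)
    (hμmono : MonotoneOn μ (Set.Icc m p))
    (θ : ℤ → ℝ → ℝ)
    (hθ : ∀ i z, θ i z = σ i * l z + ρ / 2 * (z - μ i) ^ 2)
    (h : ℤ → ℤ → ℝ → ℝ)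
    (hdef : ∀ a b z, h a b z = ∑ i ∈ Finset.Icc a b, θ i z)
    (vmn vnp : ℝ)
    (hvmn : ∀ z, z ≠ vmn → h m n vmn < h m n z)
    (hvnp : ∀ z, z ≠ vnp → h (n + 1) p vnp < h (n + 1) p z)
    (horder : vnp < vmn) :
    (∑ i ∈ Finset.Icc m n, σ i) / ((n : ℝ) - (m : ℝ) + 1)
      < (∑ i ∈ Finset.Icc (n + 1) p, σ i) / ((p : ℝ) - (n : ℝ)) := by
  have hobj : ∀ a b, h a b = blockObjective σ μ l ρ (Icc a b) := fun a b => by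
    ext z
    simp only [hdef, hθ, blockObjective]
  have hblocks : ∀ i ∈ Icc m n, ∀ j ∈ Icc (n + 1) p, μ i ≤ μ j := by
    intro i hi j hj
    rw [mem_Icc] at hi hj
    exact hμmono ⟨hi.1, by omega⟩ ⟨by omega, hj.2⟩ (by omega)
  have key := sum_div_card_lt_sum_div_card_of_minimizers_out_of_order hlmono hρ.le
    (nonempty_Icc.2 hmn) (nonempty_Icc.2 (by omega)) hblocks
    (hobj m n ▸ hvmn vnp horder.ne) (hobj (n + 1) p ▸ hvnp vmn horder.ne') horder
  rwa [Int.natCast_card_Icc (by omega), Int.natCast_card_Icc (by omega),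
    Int.cast_add, Int.cast_one, sub_add_eq_sub_sub, sub_add_cancel] at key

/-- **Proposition 3 (Appendix).**
For `m ≤ n < p` and `θ i z = σ i * l z + (ρ/2) (z - μ i)^2` with `ρ > 0`, `σ i ≥ 0`,
`l` convex and monotonically increasing, and `μ` nondecreasing on `[m,p]`, let
`v_{[a,b]}` denote the unique minimizer of `h a b z = ∑_{i ∈ [a,b]} θ i z`.
If the consecutive blocks `[m,n]` and `[n+1,p]` are out-of-order, i.e.
`v_{[m,n]} > v_{[n+1,p]}`, then
`(∑_{i=m}^{n} σ i)/(n-m+1) < (∑_{i=n+1}^{p} σ i)/(p-n)`. -/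
theorem pava_out_of_order_weights
    (m n p : ℤ) (hmn : m ≤ n) (hnp : n < p)
    (l : ℝ → ℝ) (hl : ConvexOn ℝ Set.univ l) (hlmono : Monotone l)
    (ρ : ℝ) (hρ : 0 < ρ)
    (σ μ : ℤ → ℝ) (hσ : ∀ i ∈ Finset.Icc m p, 0 ≤ σ i)
    (hμmono : MonotoneOn μ (Set.Icc m p))
    (θ : ℤ → ℝ → ℝ)
    (hθ : ∀ i z, θ i z = σ i * l z + ρ / 2 * (z - μ i) ^ 2)
    (h : ℤ → ℤ → ℝ → ℝ)
    (hdef : ∀ a b z, h a b z = ∑ i ∈ Finset.Icc a b, θ i z)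
    (vmn vnp : ℝ)
    (hvmn : ∀ z, z ≠ vmn → h m n vmn < h m n z)
    (hvnp : ∀ z, z ≠ vnp → h (n + 1) p vnp < h (n + 1) p z)
    (horder : vnp < vmn) :
    (∑ i ∈ Finset.Icc m n, σ i) / ((n : ℝ) - (m : ℝ) + 1)
      < (∑ i ∈ Finset.Icc (n + 1) p, σ i) / ((p : ℝ) - (n : ℝ)) :=
  pava_out_of_order_weights_general m n p hmn hnp l hlmono ρ hρ σ μ hμmono θ hθ h hdef vmn vnp hvmn
    hvnp horder
end

section
/- Let g : ℝ^d → ℝ ∪ {+∞} be proper, lower semicontinuous, and c-weakly convex, and let γ > 0 satisfy 0 < cγ < 1/2. Then for all x, y ∈ ℝ^d, (1 − 2cγ)·‖prox_{g,γ}(x) − prox_{g,γ}(y)‖² ≤ ‖x − y‖². -/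
/-!
For `0 < γ`, the prox objective `u ↦ g u + ‖u - x‖² / (2γ)` is `(γ⁻¹ - c)`-strongly convex, so it
grows at least quadratically away from its minimizer `px`. Evaluating the objective for `x` at `py`
and the one for `y` at `px` and adding, the values of `g` cancel and what is left is the strong
monotonicity `(1 - cγ) ‖px - py‖² ≤ ⟪px - py, x - y⟫`. Young's inequality
`2 ⟪p, q⟫ ≤ ‖p‖² + ‖q‖²` turns this into the claim.
-/

open Set Filter Topology
open scoped InnerProductSpace

section
variable {E : Type*} [NormedAddCommGroup E] [InnerProductSpace ℝ E] {s : Set E} {f : E → ℝ}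

lemma StrongConvexOn.add_sq_norm_sub_le_of_isMinOn {m : ℝ} {p u : E} (hf : StrongConvexOn s m f)
    (hp : IsMinOn f s p) (hps : p ∈ s) (hus : u ∈ s) :
    f p + m / 2 * ‖u - p‖ ^ 2 ≤ f u := by
  have hsegment : ∀ t ∈ Ioo (0 : ℝ) 1, f p + (1 - t) * (m / 2 * ‖u - p‖ ^ 2) ≤ f u := by
    rintro t ⟨ht0, ht1⟩
    have hmin :=
      isMinOn_iff.mp hp _ (hf.1 hps hus (sub_nonneg.2 ht1.le) ht0.le (sub_add_cancel 1 t))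
    have hconv := hf.2 hps hus (sub_nonneg.2 ht1.le) ht0.le (sub_add_cancel 1 t)
    rw [norm_sub_rev, smul_eq_mul, smul_eq_mul] at hconv
    refine le_of_mul_le_mul_left ?_ ht0
    linear_combination hmin + hconv
  have hlim : Tendsto (fun t : ℝ => f p + (1 - t) * (m / 2 * ‖u - p‖ ^ 2)) (𝓝[>] 0)
      (𝓝 (f p + (1 - 0) * (m / 2 * ‖u - p‖ ^ 2))) :=
    ((continuous_const.add ((continuous_const.sub continuous_id).mul continuous_const)).tendsto
      0).mono_left nhdsWithin_le_nhds
  rw [sub_zero, one_mul] at hlim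
  exact le_of_tendsto hlim (eventually_of_mem (Ioo_mem_nhdsGT one_pos) hsegment)

lemma ConvexOn.strongConvexOn_add_sq_norm_sub {φ : E → ℝ} {c : ℝ}
    (hφ : ConvexOn ℝ s fun w => φ w + c / 2 * ‖w‖ ^ 2) (a : ℝ) (x : E) :
    StrongConvexOn s (a - c) fun u => φ u + a / 2 * ‖u - x‖ ^ 2 := by
  rw [strongConvexOn_iff_convex]
  have hlin : ConvexOn ℝ s fun u => (-a) * ⟪x, u⟫_ℝ :=
    LinearMap.convexOn ((-a) • innerₗ E x) hφ.1
  refine ((hφ.add hlin).add_const (a / 2 * ‖x‖ ^ 2)).congr fun u _ => ?_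
  simp only [Pi.add_apply, norm_sub_sq_real, real_inner_comm x u]
  ring

lemma sub_mul_sq_norm_sub_le_mul_inner_of_isMinOn {φ : E → ℝ} {c a : ℝ} {x y px py : E}
    (hφ : ConvexOn ℝ s fun w => φ w + c / 2 * ‖w‖ ^ 2)
    (hpx : IsMinOn (fun u => φ u + a / 2 * ‖u - x‖ ^ 2) s px)
    (hpy : IsMinOn (fun u => φ u + a / 2 * ‖u - y‖ ^ 2) s py) (hpxs : px ∈ s) (hpys : py ∈ s) :
    (a - c) * ‖px - py‖ ^ 2 ≤ a * ⟪px - py, x - y⟫_ℝ := by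
  have hx := (hφ.strongConvexOn_add_sq_norm_sub a x).add_sq_norm_sub_le_of_isMinOn hpx hpxs hpys
  have hy := (hφ.strongConvexOn_add_sq_norm_sub a y).add_sq_norm_sub_le_of_isMinOn hpy hpys hpxs
  have hcross : ‖py - x‖ ^ 2 + ‖px - y‖ ^ 2 - ‖px - x‖ ^ 2 - ‖py - y‖ ^ 2
      = 2 * ⟪px - py, x - y⟫_ℝ := by
    simp only [norm_sub_sq_real, inner_sub_left, inner_sub_right]
    ring
  rw [norm_sub_rev py px] at hx
  linear_combination hx + hy + a / 2 * hcross

end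

theorem prox_contraction_weakly_convex_general (d : ℕ)
    (g : EuclideanSpace ℝ (Fin d) → ℝ)
    (c : ℝ)
    (hg_wc : ConvexOn ℝ Set.univ (fun w => g w + c / 2 * ‖w‖ ^ 2))
    (γ : ℝ) (hγ : 0 < γ)
    (x y px py : EuclideanSpace ℝ (Fin d))
    (hpx : ∀ u, g px + 1 / (2 * γ) * ‖px - x‖ ^ 2 ≤ g u + 1 / (2 * γ) * ‖u - x‖ ^ 2)
    (hpy : ∀ u, g py + 1 / (2 * γ) * ‖py - y‖ ^ 2 ≤ g u + 1 / (2 * γ) * ‖u - y‖ ^ 2) :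
    (1 - 2 * c * γ) * ‖px - py‖ ^ 2 ≤ ‖x - y‖ ^ 2 := by
  have hstep : 1 / (2 * γ) = γ⁻¹ / 2 := by ring
  rw [hstep] at hpx hpy
  have hscaled := sub_mul_sq_norm_sub_le_mul_inner_of_isMinOn hg_wc (isMinOn_univ_iff.2 hpx)
    (isMinOn_univ_iff.2 hpy) (mem_univ px) (mem_univ py)
  have hmono : (1 - c * γ) * ‖px - py‖ ^ 2 ≤ ⟪px - py, x - y⟫_ℝ :=
    calc (1 - c * γ) * ‖px - py‖ ^ 2 = γ * ((γ⁻¹ - c) * ‖px - py‖ ^ 2) := by field_simp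
      _ ≤ γ * (γ⁻¹ * ⟪px - py, x - y⟫_ℝ) := by gcongr
      _ = ⟪px - py, x - y⟫_ℝ := by field_simp
  have hyoung : 2 * ⟪px - py, x - y⟫_ℝ ≤ ‖px - py‖ ^ 2 + ‖x - y‖ ^ 2 := by
    linarith [real_inner_le_norm (px - py) (x - y), two_mul_le_add_sq ‖px - py‖ ‖x - y‖]
  linarith

/-- **Key estimate in Lemma 4.**
Let `g : ℝ^d → ℝ` be proper, lower semicontinuous and `c`-weakly convex, and let
`γ > 0` satisfy `0 < cγ < 1/2`.  If `px = prox_{g,γ}(x)` and `py = prox_{g,γ}(y)`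
(i.e. they minimize the corresponding proximal objectives), then
`(1 - 2cγ) ‖px - py‖² ≤ ‖x - y‖²`. -/
theorem prox_contraction_weakly_convex (d : ℕ)
    (g : EuclideanSpace ℝ (Fin d) → ℝ)
    (hg_lsc : LowerSemicontinuous g)
    (c : ℝ) (hc : 0 < c)
    (hg_wc : ConvexOn ℝ Set.univ (fun w => g w + c / 2 * ‖w‖ ^ 2))
    (γ : ℝ) (hγ : 0 < γ) (hcγ : c * γ < 1 / 2)
    (x y px py : EuclideanSpace ℝ (Fin d))
    (hpx : ∀ u, g px + 1 / (2 * γ) * ‖px - x‖ ^ 2 ≤ g u + 1 / (2 * γ) * ‖u - x‖ ^ 2)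
    (hpy : ∀ u, g py + 1 / (2 * γ) * ‖py - y‖ ^ 2 ≤ g u + 1 / (2 * γ) * ‖u - y‖ ^ 2) :
    (1 - 2 * c * γ) * ‖px - py‖ ^ 2 ≤ ‖x - y‖ ^ 2 :=
  prox_contraction_weakly_convex_general d g c hg_wc γ hγ x y px py hpx hpy
end

section
/- Let g : ℝ^d → ℝ ∪ {+∞} be proper, lower semicontinuous, and c-weakly convex, and let γ > 0 satisfy 0 < cγ ≤ 1/3. Then the displacement map of the proximal operator is hypomonotone in the following sense: for all x, y ∈ ℝ^d, ⟨(x − prox_{g,γ}(x)) − (y − prox_{g,γ}(y)), x − y⟩ ≥ −‖x − y‖². -/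
/-!
Weak convexity of `g` along the segment from `p = prox_{g,γ}(x)` to `u`, together with the
minimality of `p`, gives in the limit of short segments the proximal subgradient inequality
`g u ≥ g p + γ⁻¹ ⟪x - p, u - p⟫ - c/2 ‖u - p‖²`. Adding it for `(px, py)` and `(py, px)` yields
`⟪(x - px) - (y - py), px - py⟫ ≥ -cγ ‖px - py‖²`, hence `‖px - py‖ ≤ ‖x - y‖ / (1 - cγ)
≤ 2 ‖x - y‖`, and Cauchy–Schwarz finishes.
-/

open scoped RealInnerProductSpace
open Set Filter Topology

section

variable {E : Type*} [NormedAddCommGroup E] [InnerProductSpace ℝ E]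

def IsProxPoint (g : E → ℝ) (γ : ℝ) (x p : E) : Prop :=
  ∀ u, g p + 1 / (2 * γ) * ‖p - x‖ ^ 2 ≤ g u + 1 / (2 * γ) * ‖u - x‖ ^ 2

lemma nonneg_of_forall_mem_Ioo_nonneg_add_mul {A B : ℝ}
    (h : ∀ t ∈ Ioo (0 : ℝ) 1, 0 ≤ A + t * B) : 0 ≤ A := by
  have hlim : Tendsto (fun t : ℝ => A + t * B) (𝓝[>] 0) (𝓝 A) :=
    ((continuous_const.add (continuous_id.mul continuous_const)).tendsto' 0 A
      (by simp)).mono_left nhdsWithin_le_nhds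
  refine ge_of_tendsto hlim ?_
  filter_upwards [Ioo_mem_nhdsGT one_pos] with t ht using h t ht

lemma strongConvexOn_neg_of_convexOn_add {s : Set E} {g : E → ℝ} {c : ℝ}
    (h : ConvexOn ℝ s fun w => g w + c / 2 * ‖w‖ ^ 2) : StrongConvexOn s (-c) g :=
  strongConvexOn_iff_convex.2 (by simpa [neg_div] using h)

lemma IsProxPoint.inv_mul_inner_sub_le {g : E → ℝ} {c γ : ℝ} {x p : E}
    (hg : StrongConvexOn univ (-c) g) (hp : IsProxPoint g γ x p) (u : E) :
    γ⁻¹ * ⟪x - p, u - p⟫ - c / 2 * ‖u - p‖ ^ 2 ≤ g u - g p := by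
  suffices ∀ t ∈ Ioo (0 : ℝ) 1, 0 ≤ (g u - g p - γ⁻¹ * ⟪x - p, u - p⟫ + c / 2 * ‖u - p‖ ^ 2)
      + t * ((γ⁻¹ / 2 - c / 2) * ‖u - p‖ ^ 2) by
    linarith [nonneg_of_forall_mem_Ioo_nonneg_add_mul this]
  rintro t ⟨ht0, ht1⟩
  have hconv := hg.2 (mem_univ p) (mem_univ u) (sub_nonneg.2 ht1.le) ht0.le (sub_add_cancel 1 t)
  rw [norm_sub_rev] at hconv
  simp only [smul_eq_mul] at hconv
  have hmin := hp ((1 - t) • p + t • u)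
  have hseg : (1 - t) • p + t • u - x = (p - x) + t • (u - p) := by module
  rw [hseg, norm_add_sq_real, inner_smul_right, norm_smul, Real.norm_of_nonneg ht0.le] at hmin
  have hscaled : 0 ≤ t * ((g u - g p - γ⁻¹ * ⟪x - p, u - p⟫ + c / 2 * ‖u - p‖ ^ 2)
      + t * ((γ⁻¹ / 2 - c / 2) * ‖u - p‖ ^ 2)) := by
    rw [← neg_sub p x, inner_neg_left]
    linear_combination hmin + hconv
  exact nonneg_of_mul_nonneg_right (by linarith) ht0

lemma IsProxPoint.neg_mul_norm_sq_le_inner_sub {g : E → ℝ} {c γ : ℝ} {x y px py : E}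
    (hg : StrongConvexOn univ (-c) g) (hγ : 0 < γ)
    (hpx : IsProxPoint g γ x px) (hpy : IsProxPoint g γ y py) :
    -(c * γ) * ‖px - py‖ ^ 2 ≤ ⟪(x - px) - (y - py), px - py⟫ := by
  have hx := hpx.inv_mul_inner_sub_le hg py
  have hy := hpy.inv_mul_inner_sub_le hg px
  rw [← neg_sub px py, inner_neg_right, norm_neg] at hx
  have hsum : -c * ‖px - py‖ ^ 2 ≤ γ⁻¹ * (⟪x - px, px - py⟫ - ⟪y - py, px - py⟫) := by linarith
  rw [inner_sub_left]
  calc -(c * γ) * ‖px - py‖ ^ 2 = γ * (-c * ‖px - py‖ ^ 2) := by ring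
    _ ≤ γ * (γ⁻¹ * (⟪x - px, px - py⟫ - ⟪y - py, px - py⟫)) := by gcongr
    _ = _ := by field_simp

lemma neg_norm_sq_le_inner_sub_of_neg_mul_norm_sq_le {D W : E} {e : ℝ} (he : e ≤ 1 / 2)
    (h : -e * ‖W‖ ^ 2 ≤ ⟪D - W, W⟫) : -‖D‖ ^ 2 ≤ ⟪D - W, D⟫ := by
  rw [inner_sub_left, real_inner_self_eq_norm_sq] at h ⊢
  have hDW := real_inner_le_norm D W
  have hWD := real_inner_le_norm W D
  have hW : ‖W‖ ≤ 2 * ‖D‖ := by nlinarith [norm_nonneg W, norm_nonneg D]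
  nlinarith [norm_nonneg W, norm_nonneg D]

end

theorem prox_displacement_hypomonotone_general (d : ℕ)
    (g : EuclideanSpace ℝ (Fin d) → ℝ)
    (c : ℝ)
    (hg_wc : ConvexOn ℝ Set.univ (fun w => g w + c / 2 * ‖w‖ ^ 2))
    (γ : ℝ) (hγ : 0 < γ) (hcγ : c * γ ≤ 1 / 3)
    (x y px py : EuclideanSpace ℝ (Fin d))
    (hpx : ∀ u, g px + 1 / (2 * γ) * ‖px - x‖ ^ 2 ≤ g u + 1 / (2 * γ) * ‖u - x‖ ^ 2)
    (hpy : ∀ u, g py + 1 / (2 * γ) * ‖py - y‖ ^ 2 ≤ g u + 1 / (2 * γ) * ‖u - y‖ ^ 2) :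
    ⟪(x - px) - (y - py), x - y⟫ ≥ -‖x - y‖ ^ 2 := by
  have hmono := IsProxPoint.neg_mul_norm_sq_le_inner_sub
    (strongConvexOn_neg_of_convexOn_add hg_wc) hγ hpx hpy
  rw [show (x - px) - (y - py) = (x - y) - (px - py) by abel] at hmono ⊢
  exact neg_norm_sq_le_inner_sub_of_neg_mul_norm_sq_le (by linarith) hmono

/-- **Hypomonotonicity of the proximal displacement map (core of Lemma 2).**
Let `g : ℝ^d → ℝ` be proper, lower semicontinuous and `c`-weakly convex, and let
`γ > 0` satisfy `0 < cγ ≤ 1/3`.  If `px = prox_{g,γ}(x)` and `py = prox_{g,γ}(y)`,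
then `⟪(x - px) - (y - py), x - y⟫ ≥ -‖x - y‖²`. -/
theorem prox_displacement_hypomonotone (d : ℕ)
    (g : EuclideanSpace ℝ (Fin d) → ℝ)
    (hg_lsc : LowerSemicontinuous g)
    (c : ℝ) (hc : 0 < c)
    (hg_wc : ConvexOn ℝ Set.univ (fun w => g w + c / 2 * ‖w‖ ^ 2))
    (γ : ℝ) (hγ : 0 < γ) (hcγ : c * γ ≤ 1 / 3)
    (x y px py : EuclideanSpace ℝ (Fin d))
    (hpx : ∀ u, g px + 1 / (2 * γ) * ‖px - x‖ ^ 2 ≤ g u + 1 / (2 * γ) * ‖u - x‖ ^ 2)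
    (hpy : ∀ u, g py + 1 / (2 * γ) * ‖py - y‖ ^ 2 ≤ g u + 1 / (2 * γ) * ‖u - y‖ ^ 2) :
    ⟪(x - px) - (y - py), x - y⟫ ≥ -‖x - y‖ ^ 2 :=
  prox_displacement_hypomonotone_general d g c hg_wc γ hγ hcγ x y px py hpx hpy
end

section
/- Let g : ℝ^d → ℝ ∪ {+∞} be proper, lower semicontinuous, and c-weakly convex, and let γ > 0 satisfy 0 < cγ ≤ 1/3. Then the Moreau envelope M_{g,γ} is γ^{-1}-weakly convex; that is, the function w ↦ M_{g,γ}(w) + (1/(2γ))‖w‖² is convex on ℝ^d. -/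
open Set

/-!
Writing `‖x - w‖² + ‖w‖² = (‖x‖² + ‖x - 2w‖²) / 2` (parallelogram law), the objective
`g x + ‖x - w‖² / (2γ) + ‖w‖² / (2γ)` splits as the convex function `g x + (c/2) ‖x‖²` plus
`(1/(4γ) - c/2) ‖x‖² + ‖x - 2w‖² / (4γ)`, which is jointly convex in `(x, w)` as soon as `cγ ≤ 1/2`.
Minimizing a jointly convex function over `x` leaves a convex function of `w`, and that function is
`M w + ‖w‖² / (2γ)`. The infimum is a genuine one because for `cγ < 1/2` the objective is a convex
function plus a positive multiple of `‖x‖²`, and a convex function grows at most linearly downwards.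
-/

theorem ConvexOn.ciInf_fst {E W : Type*} [AddCommGroup E] [Module ℝ E] [AddCommGroup W]
    [Module ℝ W] {F : E × W → ℝ} (hF : ConvexOn ℝ univ F)
    (hbdd : ∀ w, BddBelow (range fun x => F (x, w))) :
    ConvexOn ℝ univ fun w => ⨅ x, F (x, w) := by
  refine ⟨convex_univ, fun w₁ _ w₂ _ t s ht hs hts => ?_⟩
  simp only [smul_eq_mul, Real.mul_iInf_of_nonneg ht, Real.mul_iInf_of_nonneg hs]
  refine le_ciInf_add_ciInf fun x₁ x₂ => ?_
  calc ⨅ x, F (x, t • w₁ + s • w₂) ≤ F (t • x₁ + s • x₂, t • w₁ + s • w₂) := ciInf_le (hbdd _) _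
    _ ≤ t * F (x₁, w₁) + s * F (x₂, w₂) := hF.2 (mem_univ (x₁, w₁)) (mem_univ (x₂, w₂)) ht hs hts

section NormedSpace

variable {E : Type*} [NormedAddCommGroup E] [NormedSpace ℝ E] {f : E → ℝ}

theorem convexOn_univ_norm_sq : ConvexOn ℝ univ fun x : E => ‖x‖ ^ 2 :=
  convexOn_univ_norm.pow (fun _ _ => norm_nonneg _) 2

theorem ConvexOn.sub_mul_norm_le_of_forall_closedBall_le (hf : ConvexOn ℝ univ f) {m : ℝ}
    (hm : ∀ x ∈ Metric.closedBall (0 : E) 1, m ≤ f x) (x : E) : m - (f 0 - m) * ‖x‖ ≤ f x := by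
  have hm0 : m ≤ f 0 := hm 0 (Metric.mem_closedBall_self zero_le_one)
  by_cases hx : ‖x‖ ≤ 1
  · nlinarith [hm x (mem_closedBall_zero_iff.2 hx), norm_nonneg x]
  -- compare with the point `‖x‖⁻¹ • x` of the unit sphere, which lies between `0` and `x`
  set r := ‖x‖
  have hr : 1 < r := not_le.1 hx
  have hrr : r * r⁻¹ = 1 := mul_inv_cancel₀ (by positivity)
  have hsphere : m ≤ r⁻¹ * f x + (1 - r⁻¹) * f 0 := by
    have hconv := hf.2 (mem_univ x) (mem_univ 0) (inv_nonneg.2 (by positivity))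
      (sub_nonneg.2 (inv_le_one_of_one_le₀ hr.le)) (add_sub_cancel _ _)
    rw [smul_zero, add_zero, smul_eq_mul, smul_eq_mul] at hconv
    refine (hm _ ?_).trans hconv
    rw [mem_closedBall_zero_iff, norm_smul, norm_inv, norm_norm, inv_mul_cancel₀ (by positivity)]
  have hscaled : r * m ≤ f x + (r - 1) * f 0 :=
    calc r * m ≤ r * (r⁻¹ * f x + (1 - r⁻¹) * f 0) := by gcongr
      _ = f x + (r - 1) * f 0 := by linear_combination (f x - f 0) * hrr
  linarith

variable [FiniteDimensional ℝ E]

theorem ConvexOn.exists_sub_mul_norm_le (hf : ConvexOn ℝ univ f) :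
    ∃ a b : ℝ, ∀ x, a - b * ‖x‖ ≤ f x := by
  obtain ⟨m, hm⟩ := (isCompact_closedBall (0 : E) 1).bddBelow_image
    hf.locallyLipschitz.continuous.continuousOn
  exact ⟨m, f 0 - m, hf.sub_mul_norm_le_of_forall_closedBall_le fun x hx => hm ⟨x, hx, rfl⟩⟩

theorem ConvexOn.bddBelow_range_add_mul_norm_sq (hf : ConvexOn ℝ univ f) {κ : ℝ} (hκ : 0 < κ) :
    BddBelow (range fun x => f x + κ * ‖x‖ ^ 2) := by
  obtain ⟨a, b, hab⟩ := hf.exists_sub_mul_norm_le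
  refine ⟨a - b ^ 2 / (4 * κ), ?_⟩
  rintro _ ⟨x, rfl⟩
  have hsq : κ * ‖x‖ ^ 2 - b * ‖x‖ + b ^ 2 / (4 * κ) = (2 * κ * ‖x‖ - b) ^ 2 / (4 * κ) := by
    field_simp
    ring
  have : 0 ≤ (2 * κ * ‖x‖ - b) ^ 2 / (4 * κ) := by positivity
  linarith [hab x]

end NormedSpace

section InnerProductSpace

variable {E : Type*} [NormedAddCommGroup E] [InnerProductSpace ℝ E] {g : E → ℝ} {c γ : ℝ}

theorem norm_sub_sq_add_norm_sq (x w : E) :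
    ‖x - w‖ ^ 2 + ‖w‖ ^ 2 = (‖x‖ ^ 2 + ‖x - (2 : ℝ) • w‖ ^ 2) / 2 := by
  have h := parallelogram_law_with_norm ℝ (x - w) w
  rw [sub_add_cancel, sub_sub, ← two_smul ℝ w] at h
  linarith

theorem convexOn_moreau_objective (hγ : 0 < γ) (hcγ : c * γ ≤ 1 / 2)
    (hg : ConvexOn ℝ univ fun x => g x + c / 2 * ‖x‖ ^ 2) :
    ConvexOn ℝ univ fun p : E × E =>
      g p.1 + 1 / (2 * γ) * ‖p.1 - p.2‖ ^ 2 + 1 / (2 * γ) * ‖p.2‖ ^ 2 := by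
  have hκ : 0 ≤ 1 / (4 * γ) - c / 2 := by
    rw [sub_nonneg, div_le_div_iff₀ two_pos (by positivity)]
    linarith
  have hsplit := ((hg.comp_linearMap (LinearMap.fst ℝ E E)).add
    ((convexOn_univ_norm_sq.comp_linearMap (LinearMap.fst ℝ E E)).smul hκ)).add
    ((convexOn_univ_norm_sq.comp_linearMap
      (LinearMap.fst ℝ E E - (2 : ℝ) • LinearMap.snd ℝ E E)).smul (by positivity : 0 ≤ 1 / (4 * γ)))
  refine hsplit.congr fun p _ => ?_
  simp only [Pi.add_apply, Function.comp_apply, LinearMap.sub_apply, LinearMap.smul_apply,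
    LinearMap.fst_apply, LinearMap.snd_apply, smul_eq_mul]
  linear_combination (-(1 / (2 * γ))) * norm_sub_sq_add_norm_sq p.1 p.2

theorem bddBelow_range_moreau_objective [FiniteDimensional ℝ E] (hγ : 0 < γ) (hcγ : c * γ < 1 / 2)
    (hg : ConvexOn ℝ univ fun x => g x + c / 2 * ‖x‖ ^ 2) (w : E) :
    BddBelow (range fun x => g x + 1 / (2 * γ) * ‖x - w‖ ^ 2) := by
  have hκ : 0 < 1 / (4 * γ) - c / 2 := by
    rw [sub_pos, div_lt_div_iff₀ two_pos (by positivity)]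
    linarith
  obtain ⟨m, hm⟩ := hg.bddBelow_range_add_mul_norm_sq hκ
  refine ⟨m - 1 / (2 * γ) * ‖w‖ ^ 2, ?_⟩
  rintro _ ⟨x, rfl⟩
  have hsplit : 1 / (2 * γ) * ‖x - w‖ ^ 2 =
      1 / (4 * γ) * ‖x‖ ^ 2 + 1 / (4 * γ) * ‖x - (2 : ℝ) • w‖ ^ 2 - 1 / (2 * γ) * ‖w‖ ^ 2 := by
    linear_combination (1 / (2 * γ)) * norm_sub_sq_add_norm_sq x w
  have : 0 ≤ 1 / (4 * γ) * ‖x - (2 : ℝ) • w‖ ^ 2 := by positivity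
  linarith [hm ⟨x, rfl⟩]

end InnerProductSpace

theorem moreau_envelope_weakly_convex_general (d : ℕ)
    (g : EuclideanSpace ℝ (Fin d) → ℝ)
    (c : ℝ)
    (hg_wc : ConvexOn ℝ Set.univ (fun w => g w + c / 2 * ‖w‖ ^ 2))
    (γ : ℝ) (hγ : 0 < γ) (hcγ : c * γ ≤ 1 / 3)
    (M : EuclideanSpace ℝ (Fin d) → ℝ)
    (hM : ∀ w, M w = ⨅ x : EuclideanSpace ℝ (Fin d),
      (g x + 1 / (2 * γ) * ‖x - w‖ ^ 2)) :
    ConvexOn ℝ Set.univ (fun w => M w + 1 / (2 * γ) * ‖w‖ ^ 2) := by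
  have hbdd := bddBelow_range_moreau_objective hγ (by linarith) hg_wc
  have hM_add : (fun w => M w + 1 / (2 * γ) * ‖w‖ ^ 2) = fun w =>
      ⨅ x, (g x + 1 / (2 * γ) * ‖x - w‖ ^ 2 + 1 / (2 * γ) * ‖w‖ ^ 2) :=
    funext fun w => by rw [hM, ciInf_add (hbdd w)]
  rw [hM_add]
  exact (convexOn_moreau_objective hγ (by linarith) hg_wc).ciInf_fst fun w =>
    (hbdd w).range_add ⟨1 / (2 * γ) * ‖w‖ ^ 2, by rintro _ ⟨_, rfl⟩; rfl⟩

/-- **Lemma 2.**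
Let `g : ℝ^d → ℝ` be proper, lower semicontinuous and `c`-weakly convex, and let
`γ > 0` satisfy `0 < cγ ≤ 1/3`.  Then the Moreau envelope
`M_{g,γ}(w) = ⨅_x (g x + (1/(2γ))‖x - w‖²)` is `γ⁻¹`-weakly convex, i.e.
`w ↦ M_{g,γ}(w) + (1/(2γ))‖w‖²` is convex. -/
theorem moreau_envelope_weakly_convex (d : ℕ)
    (g : EuclideanSpace ℝ (Fin d) → ℝ)
    (hg_lsc : LowerSemicontinuous g)
    (c : ℝ) (hc : 0 < c)
    (hg_wc : ConvexOn ℝ Set.univ (fun w => g w + c / 2 * ‖w‖ ^ 2))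
    (γ : ℝ) (hγ : 0 < γ) (hcγ : c * γ ≤ 1 / 3)
    (M : EuclideanSpace ℝ (Fin d) → ℝ)
    (hM : ∀ w, M w = ⨅ x : EuclideanSpace ℝ (Fin d),
      (g x + 1 / (2 * γ) * ‖x - w‖ ^ 2)) :
    ConvexOn ℝ Set.univ (fun w => M w + 1 / (2 * γ) * ‖w‖ ^ 2) :=
  moreau_envelope_weakly_convex_general d g c hg_wc γ hγ hcγ M hM
end

section
/- Let g : ℝ^d → ℝ ∪ {+∞} be proper, lower semicontinuous, and c-weakly convex, let 0 < γ < 1/c, D ∈ ℝ^{n×d}, ρ > 0, r > 0, and fix z, λ ∈ ℝⁿ and w⁰ ∈ ℝ^d. Suppose w⁺ ∈ ℝ^d minimizes the function w ↦ (ρ/2)‖z − Dw + λ/ρ‖² + M_{g,γ}(w) + (r/2)‖w − w⁰‖² over ℝ^d, and set λ⁺ = λ + ρ(z − Dw⁺) and w̃ = prox_{g,γ}(w⁺). Then D^⊤λ⁺ + r(w⁰ − w⁺) is a c-subgradient of g at w̃; that is, for all u ∈ ℝ^d, g(u) ≥ g(w̃) + ⟨D^⊤λ⁺ + r(w⁰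 − w⁺), u − w̃⟩ − (c/2)‖u − w̃‖². -/
/-!
If `w̃` minimizes `g + (1/2γ)‖· - w⁺‖²`, comparing with the points of the segment from `w̃` to `u`
and using `c`-weak convexity along it gives, as the step tends to `0`, that `γ⁻¹(w⁺ - w̃)` is a
`c`-subgradient of `g` at `w̃`. Since `1/2γ > c/2`, this quadratic minorant of `g` makes every
infimum defining the Moreau envelope finite, so `M ≤ g(w̃) + (1/2γ)‖w̃ - ·‖²` with equality at
`w⁺`. Hence `w⁺` minimizes the smooth quadratic obtained from the ADMM objective by this
replacement, and its stationarity condition reads `Dᵀλ⁺ + r(w⁰ - w⁺) = γ⁻¹(w⁺ - w̃)`.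
-/

open scoped RealInnerProductSpace
open Set Filter Topology

theorem le_of_forall_le_add_mul {A B C : ℝ} (h : ∀ t : ℝ, 0 < t → t ≤ 1 → A ≤ B + t * C) :
    A ≤ B := by
  have hlim : Tendsto (fun t => B + t * C) (𝓝[>] 0) (𝓝 B) := by
    have : Continuous fun t : ℝ => B + t * C := by fun_prop
    simpa using (this.tendsto 0).mono_left nhdsWithin_le_nhds
  refine ge_of_tendsto hlim ?_
  filter_upwards [Ioc_mem_nhdsGT one_pos] with t ht using h t ht.1 ht.2

variable {E F : Type*} [NormedAddCommGroup E] [InnerProductSpace ℝ E]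
  [NormedAddCommGroup F] [InnerProductSpace ℝ F]

/-- `v` is a `c`-subgradient of `g` at `x`. -/
def IsWeakSubgradient (g : E → ℝ) (c : ℝ) (x v : E) : Prop :=
  ∀ u, g x + ⟪v, u - x⟫ - c / 2 * ‖u - x‖ ^ 2 ≤ g u

theorem norm_add_smul_sq (x e : E) (t : ℝ) :
    ‖x + t • e‖ ^ 2 = ‖x‖ ^ 2 + 2 * t * ⟪x, e⟫ + t ^ 2 * ‖e‖ ^ 2 := by
  rw [norm_add_sq_real, real_inner_smul_right, norm_smul, Real.norm_eq_abs, mul_pow, sq_abs]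
  ring

theorem ConvexOn.apply_add_smul_sub_le_of_add_sq_norm {g : E → ℝ} {c : ℝ}
    (hg : ConvexOn ℝ univ fun w => g w + c / 2 * ‖w‖ ^ 2) (x y : E) {t : ℝ}
    (ht₀ : 0 ≤ t) (ht₁ : t ≤ 1) :
    g (x + t • (y - x)) ≤ g x + t * (g y - g x) + c / 2 * (t * (1 - t)) * ‖y - x‖ ^ 2 := by
  have h := hg.2 (mem_univ x) (mem_univ y) (sub_nonneg.2 ht₁) ht₀ (by ring)
  rw [show (1 - t) • x + t • y = x + t • (y - x) by module] at h
  have hy : ‖y‖ ^ 2 = ‖x‖ ^ 2 + 2 * 1 * ⟪x, y - x⟫ + 1 ^ 2 * ‖y - x‖ ^ 2 := by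
    rw [← norm_add_smul_sq, one_smul, add_sub_cancel]
  simp only [smul_eq_mul, norm_add_smul_sq, hy] at h
  linear_combination h

theorem isWeakSubgradient_of_forall_le_add_sq_norm_sub {g : E → ℝ} {c a : ℝ}
    (hg : ConvexOn ℝ univ fun w => g w + c / 2 * ‖w‖ ^ 2) {w x : E}
    (hx : ∀ u, g x + a * ‖x - w‖ ^ 2 ≤ g u + a * ‖u - w‖ ^ 2) :
    IsWeakSubgradient g c x ((2 * a) • (w - x)) := by
  intro u
  refine le_of_forall_le_add_mul (C := (a - c / 2) * ‖u - x‖ ^ 2) fun t ht₀ ht₁ => ?_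
  have hmin := hx (x + t • (u - x))
  have hchord := hg.apply_add_smul_sub_le_of_add_sq_norm x u ht₀.le ht₁
  rw [add_sub_right_comm, norm_add_smul_sq] at hmin
  rw [real_inner_smul_left, ← neg_sub x w, inner_neg_left]
  refine le_of_mul_le_mul_left ?_ ht₀
  linear_combination hmin + hchord

theorem neg_sq_norm_div_le_mul_sq_norm_add_inner {A : ℝ} (hA : 0 < A) (v y : E) :
    -(‖v‖ ^ 2 / (4 * A)) ≤ A * ‖y‖ ^ 2 + ⟪v, y⟫ := by
  have h := norm_add_smul_sq v y (2 * A)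
  rw [neg_le, neg_add', le_div_iff₀ (by positivity)]
  nlinarith [sq_nonneg ‖v + (2 * A) • y‖]

theorem IsWeakSubgradient.bddBelow_range_add_mul_sq_norm_sub {g : E → ℝ} {c a : ℝ} {x v : E}
    (hv : IsWeakSubgradient g c x v) (ha : c / 2 < a) (w : E) :
    BddBelow (range fun u => g u + a * ‖u - w‖ ^ 2) := by
  refine ⟨g x - ‖v - (2 * a) • (w - x)‖ ^ 2 / (4 * (a - c / 2)) + a * ‖w - x‖ ^ 2, ?_⟩
  rintro _ ⟨u, rfl⟩
  have hq := neg_sq_norm_div_le_mul_sq_norm_add_inner (sub_pos.2 ha) (v - (2 * a) • (w - x)) (u - x)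
  rw [inner_sub_left, real_inner_smul_left, real_inner_comm (u - x) (w - x)] at hq
  change _ ≤ g u + a * ‖u - w‖ ^ 2
  rw [← sub_sub_sub_cancel_right u w x, norm_sub_sq_real (u - x) (w - x)]
  linear_combination hq + hv u

theorem adjoint_apply_add_smul_eq_of_forall_le [CompleteSpace E] [CompleteSpace F]
    (D : E →L[ℝ] F) {ρ a r : ℝ} (hρ : ρ ≠ 0)
    {z lam : F} {y w0 wp : E}
    (hmin : ∀ w, ρ / 2 * ‖z - D wp + ρ⁻¹ • lam‖ ^ 2 + a * ‖y - wp‖ ^ 2 + r / 2 * ‖wp - w0‖ ^ 2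
      ≤ ρ / 2 * ‖z - D w + ρ⁻¹ • lam‖ ^ 2 + a * ‖y - w‖ ^ 2 + r / 2 * ‖w - w0‖ ^ 2) :
    ContinuousLinearMap.adjoint D (lam + ρ • (z - D wp)) + r • (w0 - wp) = (2 * a) • (wp - y) := by
  have hderiv : HasFDerivAt
      (fun w => ρ / 2 * ‖z - D w + ρ⁻¹ • lam‖ ^ 2 + a * ‖y - w‖ ^ 2 + r / 2 * ‖w - w0‖ ^ 2)
      ((ρ / 2) • (2 • (innerSL ℝ (z - D wp + ρ⁻¹ • lam)).comp (-D))
        + a • (2 • (innerSL ℝ (y - wp)).comp (-ContinuousLinearMap.id ℝ E))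
        + (r / 2) • (2 • (innerSL ℝ (wp - w0)).comp (ContinuousLinearMap.id ℝ E))) wp := by
    refine ((((hasFDerivAt_const z wp).sub D.hasFDerivAt).add_const _).norm_sq.const_mul _
      |>.add (((hasFDerivAt_const y wp).sub (hasFDerivAt_id wp)).norm_sq.const_mul _)
      |>.add (((hasFDerivAt_id wp).sub_const w0).norm_sq.const_mul _)) |>.congr_fderiv ?_
    simp
  have hzero := ((isMinOn_univ_iff.2 hmin).isLocalMin univ_mem).hasFDerivAt_eq_zero hderiv
  have hlam : lam + ρ • (z - D wp) = ρ • (z - D wp + ρ⁻¹ • lam) := by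
    rw [smul_add, smul_inv_smul₀ hρ, add_comm]
  refine ext_inner_right ℝ fun e => ?_
  have he := congrArg (fun L => L e) hzero
  simp only [add_apply, smul_apply,
    ContinuousLinearMap.comp_apply, neg_apply, ContinuousLinearMap.id_apply,
    coe_innerSL_apply, inner_neg_right, smul_eq_mul, nsmul_eq_mul, zero_apply] at he
  rw [inner_add_left, hlam, ContinuousLinearMap.adjoint_inner_left, ← neg_sub wp w0, ← neg_sub y wp]
  simp only [real_inner_smul_left, inner_neg_left, smul_neg]
  linear_combination -he

theorem smoothed_admm_w_update_first_order_general (d n : ℕ)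
    (g : EuclideanSpace ℝ (Fin d) → ℝ)
    (c : ℝ)
    (hg_wc : ConvexOn ℝ Set.univ (fun w => g w + c / 2 * ‖w‖ ^ 2))
    (γ : ℝ) (hγ : 0 < γ) (hγc : γ < 1 / c)
    (M : EuclideanSpace ℝ (Fin d) → ℝ)
    (hM : ∀ w, M w = ⨅ x : EuclideanSpace ℝ (Fin d),
      (g x + 1 / (2 * γ) * ‖x - w‖ ^ 2))
    (D : EuclideanSpace ℝ (Fin d) →L[ℝ] EuclideanSpace ℝ (Fin n))
    (ρ r : ℝ) (hρ : 0 < ρ)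
    (z lam : EuclideanSpace ℝ (Fin n)) (w0 : EuclideanSpace ℝ (Fin d))
    (wp : EuclideanSpace ℝ (Fin d))
    (hwp : ∀ w, ρ / 2 * ‖z - D wp + ρ⁻¹ • lam‖ ^ 2 + M wp + r / 2 * ‖wp - w0‖ ^ 2
      ≤ ρ / 2 * ‖z - D w + ρ⁻¹ • lam‖ ^ 2 + M w + r / 2 * ‖w - w0‖ ^ 2)
    (lamp : EuclideanSpace ℝ (Fin n))
    (hlamp : lamp = lam + ρ • (z - D wp))
    (wt : EuclideanSpace ℝ (Fin d))
    (hwt : ∀ u, g wt + 1 / (2 * γ) * ‖wt - wp‖ ^ 2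
      ≤ g u + 1 / (2 * γ) * ‖u - wp‖ ^ 2) :
    ∀ u, g u ≥ g wt
      + ⟪(ContinuousLinearMap.adjoint D) lamp + r • (w0 - wp), u - wt⟫
      - c / 2 * ‖u - wt‖ ^ 2 := by
  have hc : 0 < c := one_div_pos.1 (hγ.trans hγc)
  have ha : c / 2 < 1 / (2 * γ) := by
    have hcγ : c < 1 / γ := (lt_one_div hγ hc).1 hγc
    have : 1 / (2 * γ) = 1 / γ / 2 := by ring
    linarith
  have hsub := isWeakSubgradient_of_forall_le_add_sq_norm_sub hg_wc hwt
  have hM_le (w) : M w ≤ g wt + 1 / (2 * γ) * ‖wt - w‖ ^ 2 :=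
    (hM w).symm ▸ ciInf_le (hsub.bddBelow_range_add_mul_sq_norm_sub ha w) wt
  have hM_wp : g wt + 1 / (2 * γ) * ‖wt - wp‖ ^ 2 ≤ M wp := (hM wp).symm ▸ le_ciInf hwt
  have hstat := adjoint_apply_add_smul_eq_of_forall_le D hρ.ne' (z := z) (lam := lam) (y := wt)
    (w0 := w0) (wp := wp) (a := 1 / (2 * γ)) (r := r) fun w => by
    linarith [hwp w, hM_le w, hM_wp]
  intro u
  rw [hlamp, hstat]
  linarith [hsub u]

/-- **Second inclusion of Proposition 2 (smoothed ADMM).**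
Let `g : ℝ^d → ℝ` be proper, lsc and `c`-weakly convex, `0 < γ < 1/c`, and let
`M = M_{g,γ}` be the Moreau envelope.  If `w⁺` minimizes
`w ↦ (ρ/2)‖z - Dw + λ/ρ‖² + M(w) + (r/2)‖w - w⁰‖²`, `λ⁺ = λ + ρ(z - Dw⁺)` and
`w̃ = prox_{g,γ}(w⁺)`, then `D^⊤λ⁺ + r(w⁰ - w⁺)` is a `c`-subgradient of `g`
at `w̃`. -/
theorem smoothed_admm_w_update_first_order (d n : ℕ)
    (g : EuclideanSpace ℝ (Fin d) → ℝ)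
    (hg_lsc : LowerSemicontinuous g)
    (c : ℝ) (hc : 0 < c)
    (hg_wc : ConvexOn ℝ Set.univ (fun w => g w + c / 2 * ‖w‖ ^ 2))
    (γ : ℝ) (hγ : 0 < γ) (hγc : γ < 1 / c)
    (M : EuclideanSpace ℝ (Fin d) → ℝ)
    (hM : ∀ w, M w = ⨅ x : EuclideanSpace ℝ (Fin d),
      (g x + 1 / (2 * γ) * ‖x - w‖ ^ 2))
    (D : EuclideanSpace ℝ (Fin d) →L[ℝ] EuclideanSpace ℝ (Fin n))
    (ρ r : ℝ) (hρ : 0 < ρ) (hr : 0 < r)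
    (z lam : EuclideanSpace ℝ (Fin n)) (w0 : EuclideanSpace ℝ (Fin d))
    (wp : EuclideanSpace ℝ (Fin d))
    (hwp : ∀ w, ρ / 2 * ‖z - D wp + ρ⁻¹ • lam‖ ^ 2 + M wp + r / 2 * ‖wp - w0‖ ^ 2
      ≤ ρ / 2 * ‖z - D w + ρ⁻¹ • lam‖ ^ 2 + M w + r / 2 * ‖w - w0‖ ^ 2)
    (lamp : EuclideanSpace ℝ (Fin n))
    (hlamp : lamp = lam + ρ • (z - D wp))
    (wt : EuclideanSpace ℝ (Fin d))
    (hwt : ∀ u, g wt + 1 / (2 * γ) * ‖wt - wp‖ ^ 2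
      ≤ g u + 1 / (2 * γ) * ‖u - wp‖ ^ 2) :
    ∀ u, g u ≥ g wt
      + ⟪(ContinuousLinearMap.adjoint D) lamp + r • (w0 - wp), u - wt⟫
      - c / 2 * ‖u - wt‖ ^ 2 :=
  smoothed_admm_w_update_first_order_general d n g c hg_wc γ hγ hγc M hM D ρ r hρ z lam w0 wp hwp
    lamp hlamp wt hwt
end

section
/- Fix n, d ≥ 1, a matrix D ∈ ℝ^{n×d}, ρ > 0, weights σ_i ≥ 0 and a convex, monotonically increasing, nonnegative loss l : ℝ → ℝ defining Ω(z) = Σ_{i=1}^n σ_i l(z_{[i]}), and a proper, lower semicontinuous, c-weakly convex regularizer g : ℝ^d → ℝ ∪ {+∞} with r > c. Define L_ρ(w, z; λ) = Ω(z) + ⟨λ, z − Dw⟩ + (ρ/2)‖z − Dw‖² + g(w). Suppose one ADMM step from (w^k, z^k, λ^k) produces (w^{k+1}, z^{k+1}, λ^{k+1}) such that: (a) L_ρ(w^k, z^k; λ^k) ≥ L_ρ(w^k, z^{k+1}; λ^k) (descent in the z-update); (b) w^{k+1} minimizes w ↦ (ρ/2)‖z^{k+1} − Dw + λ^k/ρ‖²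 + g(w) + (r/2)‖w − w^k‖² over ℝ^d; and (c) λ^{k+1} = λ^k + ρ(z^{k+1} − Dw^{k+1}). Then L_ρ(w^k, z^k; λ^k) − L_ρ(w^{k+1}, z^{k+1}; λ^{k+1}) ≥ ((2r − c)/2)·‖w^{k+1} − w^k‖² − (1/ρ)·‖λ^{k+1} − λ^k‖². -/
/-!
Split the decrease of `L_ρ` into its `z`-, `w`- and `λ`-parts. The `z`-part is nonnegative by (a).
The `w`-subproblem objective in (b) is `(r - c)`-strongly convex (a convex quadratic, the
`(-c)`-strongly convex `g` and the `r`-strongly convex proximal term), so its minimizer `wᵏ⁺¹`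
beats `wᵏ` by `(r - c)/2 ‖wᵏ⁺¹ - wᵏ‖²`; after completing the square in `L_ρ`, the `w`-part is this
objective without its proximal term, which contributes another `r/2 ‖wᵏ⁺¹ - wᵏ‖²`. By (c) the
`λ`-part is `⟪λᵏ - λᵏ⁺¹, zᵏ⁺¹ - Dwᵏ⁺¹⟫ = -‖λᵏ⁺¹ - λᵏ‖² / ρ`.
-/

open scoped RealInnerProductSpace

open Set Filter Topology

section

variable {E F : Type*} [NormedAddCommGroup E] [InnerProductSpace ℝ E]
  [NormedAddCommGroup F] [InnerProductSpace ℝ F]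

lemma StrongConvexOn.add {s : Set E} {m n : ℝ} {f g : E → ℝ} (hf : StrongConvexOn s m f)
    (hg : StrongConvexOn s n g) : StrongConvexOn s (m + n) (f + g) := by
  have hmod : (fun t : ℝ ↦ (m + n) / 2 * t ^ 2)
      = (fun t ↦ m / 2 * t ^ 2) + fun t ↦ n / 2 * t ^ 2 := by
    ext t
    simp only [Pi.add_apply]
    ring
  unfold StrongConvexOn
  rw [hmod]
  exact UniformConvexOn.add hf hg

lemma strongConvexOn_neg_iff_convexOn_add {s : Set E} {c : ℝ} {f : E → ℝ} :
    StrongConvexOn s (-c) f ↔ ConvexOn ℝ s fun x ↦ f x + c / 2 * ‖x‖ ^ 2 := by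
  simp only [strongConvexOn_iff_convex, neg_div, neg_mul, sub_neg_eq_add]

lemma strongConvexOn_univ_half_mul_norm_sub_sq (m : ℝ) (a : E) :
    StrongConvexOn univ m fun x ↦ m / 2 * ‖x - a‖ ^ 2 := by
  rw [strongConvexOn_iff_convex]
  have h : (fun x ↦ m / 2 * ‖x - a‖ ^ 2 - m / 2 * ‖x‖ ^ 2)
      = fun x ↦ (-m) * ⟪a, x⟫ + m / 2 * ‖a‖ ^ 2 := by
    ext x
    rw [norm_sub_sq_real, real_inner_comm]
    ring
  rw [h]
  exact (((-m) • innerₛₗ ℝ a).convexOn convex_univ).add_const _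

lemma convexOn_univ_norm_sub_apply_sq (A : E →L[ℝ] F) (b : F) :
    ConvexOn ℝ univ fun x ↦ ‖b - A x‖ ^ 2 :=
  ((convexOn_norm convex_univ).pow (fun _ _ ↦ norm_nonneg _) 2).comp_affineMap
    (AffineMap.const ℝ E b - A.toLinearMap.toAffineMap)

lemma StrongConvexOn.add_half_mul_norm_sub_sq_le_of_isMinOn {s : Set E} {m : ℝ} {f : E → ℝ}
    {x y : E} (hf : StrongConvexOn s m f) (hmin : IsMinOn f s x) (hx : x ∈ s) (hy : y ∈ s) :
    f x + m / 2 * ‖y - x‖ ^ 2 ≤ f y := by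
  have hseg : ∀ t ∈ Ioo (0 : ℝ) 1, f x + (1 - t) * (m / 2 * ‖y - x‖ ^ 2) ≤ f y := by
    rintro t ⟨ht0, ht1⟩
    have hweights := sub_add_cancel 1 t
    have hmid := hf.2 hx hy (sub_nonneg.2 ht1.le) ht0.le hweights
    have hle := isMinOn_iff.1 hmin _ (hf.1 hx hy (sub_nonneg.2 ht1.le) ht0.le hweights)
    rw [norm_sub_rev] at hmid
    simp only [smul_eq_mul] at hmid
    -- `hle` and `hmid` give `t * f x ≤ t * f y - t * (1 - t) * (m / 2 * ‖y - x‖ ^ 2)`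
    nlinarith
  have hlim : Tendsto (fun t : ℝ ↦ f x + (1 - t) * (m / 2 * ‖y - x‖ ^ 2)) (𝓝[>] 0)
      (𝓝 (f x + (1 - 0) * (m / 2 * ‖y - x‖ ^ 2))) :=
    (Continuous.tendsto (by fun_prop) 0).mono_left nhdsWithin_le_nhds
  rw [sub_zero, one_mul] at hlim
  refine le_of_tendsto hlim ?_
  filter_upwards [Ioo_mem_nhdsGT (zero_lt_one' ℝ)] with t ht using hseg t ht

lemma inner_add_half_mul_norm_sq_eq {ρ : ℝ} (hρ : ρ ≠ 0) (x y : E) :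
    ⟪y, x⟫ + ρ / 2 * ‖x‖ ^ 2 = ρ / 2 * ‖x + ρ⁻¹ • y‖ ^ 2 - ‖y‖ ^ 2 / (2 * ρ) := by
  rw [norm_add_sq_real, norm_smul, real_inner_smul_right, real_inner_comm, mul_pow,
    Real.norm_eq_abs, sq_abs]
  field_simp
  ring

end

theorem admm_one_step_descent_general (n d : ℕ)
    (D : EuclideanSpace ℝ (Fin d) →L[ℝ] EuclideanSpace ℝ (Fin n))
    (ρ : ℝ) (hρ : 0 < ρ)
    (Ω : EuclideanSpace ℝ (Fin n) → ℝ)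
    (g : EuclideanSpace ℝ (Fin d) → ℝ)
    (c : ℝ)
    (hg_wc : ConvexOn ℝ Set.univ (fun w => g w + c / 2 * ‖w‖ ^ 2))
    (r : ℝ)
    (L : EuclideanSpace ℝ (Fin d) → EuclideanSpace ℝ (Fin n) →
      EuclideanSpace ℝ (Fin n) → ℝ)
    (hL : ∀ w z lam, L w z lam
      = Ω z + ⟪lam, z - D w⟫ + ρ / 2 * ‖z - D w‖ ^ 2 + g w)
    (wk wkp : EuclideanSpace ℝ (Fin d))
    (zk zkp lamk lamkp : EuclideanSpace ℝ (Fin n))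
    (ha : L wk zk lamk ≥ L wk zkp lamk)
    (hb : ∀ u, ρ / 2 * ‖zkp - D wkp + ρ⁻¹ • lamk‖ ^ 2 + g wkp
        + r / 2 * ‖wkp - wk‖ ^ 2
      ≤ ρ / 2 * ‖zkp - D u + ρ⁻¹ • lamk‖ ^ 2 + g u + r / 2 * ‖u - wk‖ ^ 2)
    (hc' : lamkp = lamk + ρ • (zkp - D wkp)) :
    L wk zk lamk - L wkp zkp lamkp
      ≥ (2 * r - c) / 2 * ‖wkp - wk‖ ^ 2 - 1 / ρ * ‖lamkp - lamk‖ ^ 2 := by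
  have hquad : StrongConvexOn univ 0 fun u ↦ ρ / 2 * ‖zkp - D u + ρ⁻¹ • lamk‖ ^ 2 := by
    simp_rw [strongConvexOn_zero, sub_add_eq_add_sub]
    exact (convexOn_univ_norm_sub_apply_sq D _).smul (by positivity)
  have hobj := ((hquad.add (strongConvexOn_neg_iff_convexOn_add.2 hg_wc)).add
    (strongConvexOn_univ_half_mul_norm_sub_sq r wk)).add_half_mul_norm_sub_sq_le_of_isMinOn
      (y := wk) (fun u _ ↦ hb u) (mem_univ _) (mem_univ _)
  simp only [Pi.add_apply, sub_self, norm_zero, norm_sub_rev wk wkp] at hobj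
  have hsq : ∀ u, L u zkp lamk
      = Ω zkp + ρ / 2 * ‖zkp - D u + ρ⁻¹ • lamk‖ ^ 2 + g u - ‖lamk‖ ^ 2 / (2 * ρ) := by
    intro u
    rw [hL, add_assoc (Ω zkp), inner_add_half_mul_norm_sq_eq hρ.ne']
    ring
  have hdual : L wkp zkp lamk - L wkp zkp lamkp = -(1 / ρ) * ‖lamkp - lamk‖ ^ 2 := by
    have hstep : lamkp - lamk = ρ • (zkp - D wkp) := by rw [hc', add_sub_cancel_left]
    rw [hL, hL, hstep, norm_smul, Real.norm_eq_abs, abs_of_pos hρ, hc', inner_add_left,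
      real_inner_smul_left, real_inner_self_eq_norm_sq]
    field_simp
    ring
  linarith [hsq wk, hsq wkp]

/-- **Per-iteration descent estimate (inequality (29) in the proof of Theorem 1).**
With `Ω(z) = ∑ᵢ σᵢ l(z₍ᵢ₎)` (sorted entries), `g` proper, lsc and `c`-weakly convex,
`r > c`, and the augmented Lagrangian
`L_ρ(w,z;λ) = Ω(z) + ⟪λ, z - Dw⟫ + (ρ/2)‖z - Dw‖² + g(w)`,
one ADMM step satisfying (a) descent in the `z`-update, (b) exact minimization in
the `w`-update, and (c) the dual update, yields
`L_ρ(wᵏ,zᵏ;λᵏ) - L_ρ(wᵏ⁺¹,zᵏ⁺¹;λᵏ⁺¹) ≥ ((2r-c)/2)‖wᵏ⁺¹-wᵏ‖² - (1/ρ)‖λᵏ⁺¹-λᵏ‖²`. -/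
theorem admm_one_step_descent (n d : ℕ) (hn : 1 ≤ n) (hd : 1 ≤ d)
    (D : EuclideanSpace ℝ (Fin d) →L[ℝ] EuclideanSpace ℝ (Fin n))
    (ρ : ℝ) (hρ : 0 < ρ)
    (sw : Fin n → ℝ) (hsw : ∀ i, 0 ≤ sw i)
    (l : ℝ → ℝ) (hl_conv : ConvexOn ℝ Set.univ l) (hl_mono : Monotone l)
    (hl_nonneg : ∀ t, 0 ≤ l t)
    (Ω : EuclideanSpace ℝ (Fin n) → ℝ)
    (hΩ : ∀ z, Ω z = ∑ i : Fin n, sw i * l (z (Tuple.sort (fun j => z j) i)))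
    (g : EuclideanSpace ℝ (Fin d) → ℝ)
    (hg_lsc : LowerSemicontinuous g)
    (c : ℝ) (hc : 0 < c)
    (hg_wc : ConvexOn ℝ Set.univ (fun w => g w + c / 2 * ‖w‖ ^ 2))
    (r : ℝ) (hr : c < r)
    (L : EuclideanSpace ℝ (Fin d) → EuclideanSpace ℝ (Fin n) →
      EuclideanSpace ℝ (Fin n) → ℝ)
    (hL : ∀ w z lam, L w z lam
      = Ω z + ⟪lam, z - D w⟫ + ρ / 2 * ‖z - D w‖ ^ 2 + g w)
    (wk wkp : EuclideanSpace ℝ (Fin d))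
    (zk zkp lamk lamkp : EuclideanSpace ℝ (Fin n))
    (ha : L wk zk lamk ≥ L wk zkp lamk)
    (hb : ∀ u, ρ / 2 * ‖zkp - D wkp + ρ⁻¹ • lamk‖ ^ 2 + g wkp
        + r / 2 * ‖wkp - wk‖ ^ 2
      ≤ ρ / 2 * ‖zkp - D u + ρ⁻¹ • lamk‖ ^ 2 + g u + r / 2 * ‖u - wk‖ ^ 2)
    (hc' : lamkp = lamk + ρ • (zkp - D wkp)) :
    L wk zk lamk - L wkp zkp lamkp
      ≥ (2 * r - c) / 2 * ‖wkp - wk‖ ^ 2 - 1 / ρ * ‖lamkp - lamk‖ ^ 2 :=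
  admm_one_step_descent_general n d D ρ hρ Ω g c hg_wc r L hL wk wkp zk zkp lamk lamkp ha hb hc'
end
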